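/- Let g ∈ F((x^{-1})) satisfy P*(x)·g(x^d) = g(x) where P* ∈ F[x] has degree at most d-1 and d ≥ 2. If p(x)/q(x) is a rational function with ||g(x) - p(x)/q(x)|| ≤ -2||q(x)|| - c for some integer c ≥ 1, then ||g(x) - P*(x)p(x^d)/q(x^d)|| ≤ -2||q(x^d)|| - (cd - d + 1). In particular, P*(x)p(x^d)/q(x^d) approximates g with rate at least cd - d + 1. -/

import Mathlib

open Polynomial
open scoped Classical

noncomputable section

variable {F : Type*} [Field F]

/-- The element `x = T⁻¹` of `F((T))`: we regard `F((x⁻¹))` as the field of formal Laurent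
series in `T = x⁻¹`. -/
def xx : LaurentSeries F := ((PowerSeries.X : PowerSeries F) : LaurentSeries F)⁻¹

/-- Evaluation of a polynomial in the variable `x` inside `F((x⁻¹))`. -/
def pev (p : Polynomial F) : LaurentSeries F := Polynomial.aeval (xx : LaurentSeries F) p

/-- Degree valuation `‖f‖` on `F((x⁻¹))`, with `‖0‖ = ⊥`. -/
def degB (f : LaurentSeries F) : WithBot ℤ := if f = 0 then ⊥ else (-(f.order) : ℤ)

/-- Substitution `x ↦ x^d` (equivalently `T ↦ T^d`) on Laurent series. -/
def lsubst (d : ℕ) (f : LaurentSeries F) : LaurentSeries F :=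
  if h : 0 < d then
    HahnSeries.embDomain
      (OrderEmbedding.ofStrictMono (fun n : ℤ => (d : ℤ) * n)
        (fun _ _ hab => mul_lt_mul_of_pos_left hab (by exact_mod_cast h))) f
  else 0

/-! Substituting `x ↦ x^d` is an `F`-algebra endomorphism of `F((x⁻¹))` that multiplies the
degree valuation by `d` and commutes with evaluating polynomials. Applied to `g - p/q` and
multiplied by `P*`, it yields `g - P* p(x^d)/q(x^d)` by the functional equation, so the
valuation of the latter is at most `(d - 1) + d (-2 deg q - c) = -2 deg q(x^d) - (cd - d + 1)`. -/

lemma xx_eq_single : (xx : LaurentSeries F) = HahnSeries.single (-1) 1 := by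
  refine inv_eq_of_mul_eq_one_left ?_
  rw [HahnSeries.ofPowerSeries_X, HahnSeries.single_mul_single]
  norm_num

lemma algebraMap_eq_single (a : F) :
    algebraMap F (LaurentSeries F) a = HahnSeries.single 0 a := by
  rw [HahnSeries.algebraMap_apply', PowerSeries.algebraMap_apply, Algebra.algebraMap_self,
    RingHom.id_apply, HahnSeries.ofPowerSeries_C, HahnSeries.C_apply]

lemma pev_eq_sum_single (p : F[X]) :
    pev p = ∑ i ∈ p.support, HahnSeries.single (-(i : ℤ)) (p.coeff i) := by
  conv_lhs => rw [pev, p.as_sum_support, map_sum]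
  refine Finset.sum_congr rfl fun i _ => ?_
  rw [aeval_monomial, xx_eq_single, HahnSeries.single_pow, algebraMap_eq_single,
    HahnSeries.single_mul_single]
  simp

lemma coeff_pev_eq_zero_of_lt (p : F[X]) {k : ℤ} (hk : k < -(p.natDegree : ℤ)) :
    (pev p).coeff k = 0 := by
  rw [pev_eq_sum_single, HahnSeries.coeff_sum]
  refine Finset.sum_eq_zero fun i hi => HahnSeries.coeff_single_of_ne ?_
  have := le_natDegree_of_mem_supp i hi
  omega

lemma degB_pev_le (p : F[X]) : degB (pev p) ≤ (p.natDegree : ℤ) := by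
  unfold degB
  split_ifs with h
  · exact bot_le
  · have := (HahnSeries.le_order_iff_forall h).mpr fun _ => coeff_pev_eq_zero_of_lt p
    exact WithBot.coe_le_coe.mpr (by omega)

lemma degB_mul (f g : LaurentSeries F) : degB (f * g) = degB f + degB g := by
  by_cases hf : f = 0
  · simp [degB, hf]
  by_cases hg : g = 0
  · simp [degB, hg]
  simp only [degB, if_neg hf, if_neg hg, if_neg (mul_ne_zero hf hg),
    HahnSeries.order_mul hf hg]
  norm_cast
  ring

def lsubstAlgHom {d : ℕ} (hd : 0 < d) : LaurentSeries F →ₐ[F] LaurentSeries F :=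
  { HahnSeries.embDomainRingHom (AddMonoidHom.mulLeft (d : ℤ))
      (mul_right_injective₀ (by positivity)) fun _ _ => mul_le_mul_iff_right₀ (by positivity) with
    commutes' := fun a => by
      simp only [algebraMap_eq_single]
      exact HahnSeries.embDomain_single.trans (by simp) }

lemma coe_lsubstAlgHom {d : ℕ} (hd : 0 < d) : ⇑(lsubstAlgHom (F := F) hd) = lsubst d := by
  funext f
  rw [lsubst, dif_pos hd]
  exact congrArg (HahnSeries.embDomain · f) (RelEmbedding.ext fun _ => rfl)

lemma lsubst_xx {d : ℕ} (hd : 0 < d) : lsubst d (xx : LaurentSeries F) = xx ^ d := by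
  rw [lsubst, dif_pos hd, xx_eq_single, HahnSeries.embDomain_single, HahnSeries.single_pow,
    one_pow, nsmul_eq_mul]
  rfl

lemma pev_comp_X_pow {d : ℕ} (hd : 0 < d) (p : F[X]) :
    pev (p.comp (X ^ d)) = lsubst d (pev p) := by
  rw [pev, aeval_comp, map_pow, aeval_X, ← lsubst_xx hd, ← coe_lsubstAlgHom hd,
    aeval_algHom_apply]
  rfl

lemma lsubst_eq_zero_iff {d : ℕ} (hd : 0 < d) {f : LaurentSeries F} : lsubst d f = 0 ↔ f = 0 := by
  rw [lsubst, dif_pos hd]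
  exact HahnSeries.embDomain_injective.eq_iff' HahnSeries.embDomain_zero

lemma order_lsubst {d : ℕ} (hd : 0 < d) {f : LaurentSeries F} (hf : f ≠ 0) :
    (lsubst d f).order = d * f.order := by
  have hf' := (lsubst_eq_zero_iff hd).not.mpr hf
  rw [lsubst, dif_pos hd] at hf' ⊢
  apply WithTop.coe_injective
  rw [HahnSeries.order_eq_orderTop_of_ne_zero hf', HahnSeries.orderTop_embDomain,
    ← HahnSeries.order_eq_orderTop_of_ne_zero hf, WithTop.map_coe]
  rfl

lemma degB_lsubst_le {d : ℕ} (hd : 0 < d) {f : LaurentSeries F} {m : ℤ}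
    (hf : degB f ≤ m) : degB (lsubst d f) ≤ (d * m : ℤ) := by
  by_cases h0 : f = 0
  · simp [degB, h0, lsubst_eq_zero_iff hd]
  rw [degB, if_neg h0, WithBot.coe_le_coe] at hf
  rw [degB, if_neg ((lsubst_eq_zero_iff hd).not.mpr h0), WithBot.coe_le_coe, order_lsubst hd h0]
  nlinarith

theorem rate_improvement_general (g : LaurentSeries F) (Pstar : Polynomial F) (d : ℕ) (hd : 2 ≤ d)
    (hdeg : Pstar.natDegree ≤ d - 1) (hfe : pev Pstar * lsubst d g = g)
    (p q : Polynomial F) (c : ℤ)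
    (happ : degB (g - pev p / pev q) ≤ (((-2 * (q.natDegree : ℤ) - c) : ℤ) : WithBot ℤ)) :
    degB (g - pev Pstar * pev (p.comp (Polynomial.X ^ d)) / pev (q.comp (Polynomial.X ^ d))) ≤
      (((-2 * ((q.comp (Polynomial.X ^ d)).natDegree : ℤ) - (c * d - d + 1)) : ℤ) :
        WithBot ℤ) := by
  have hd0 : 0 < d := by omega
  have hdiff : g - pev Pstar * pev (p.comp (X ^ d)) / pev (q.comp (X ^ d)) =
      pev Pstar * lsubst d (g - pev p / pev q) := by
    rw [pev_comp_X_pow hd0, pev_comp_X_pow hd0, ← coe_lsubstAlgHom hd0, map_sub, map_div₀,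
      mul_sub, coe_lsubstAlgHom, hfe]
    ring
  rw [hdiff, degB_mul, natDegree_comp, natDegree_X_pow]
  calc _ ≤ (((d : ℤ) - 1 : ℤ) : WithBot ℤ) + ((d * (-2 * q.natDegree - c) : ℤ) : WithBot ℤ) :=
        add_le_add ((degB_pev_le Pstar).trans (WithBot.coe_le_coe.mpr (by omega)))
          (degB_lsubst_le hd0 happ)
    _ = _ := by
        rw [← WithBot.coe_add, WithBot.coe_inj]
        push_cast
        ring

/-- Suppose `g ∈ F((x⁻¹))` satisfies `P*(x) g(x^d) = g(x)` with
`deg P* ≤ d-1` and `d ≥ 2`.  If `‖g - p/q‖ ≤ -2‖q‖ - c` with `c ≥ 1`, then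
`‖g - P*(x) p(x^d)/q(x^d)‖ ≤ -2‖q(x^d)‖ - (cd - d + 1)`; that is, `P*(x)p(x^d)/q(x^d)`
approximates `g` with rate at least `cd - d + 1`. -/
theorem rate_improvement (g : LaurentSeries F) (Pstar : Polynomial F) (d : ℕ) (hd : 2 ≤ d)
    (hdeg : Pstar.natDegree ≤ d - 1) (hfe : pev Pstar * lsubst d g = g)
    (p q : Polynomial F) (hq : q ≠ 0) (c : ℤ) (hc : 1 ≤ c)
    (happ : degB (g - pev p / pev q) ≤ (((-2 * (q.natDegree : ℤ) - c) : ℤ) : WithBot ℤ)) :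
    degB (g - pev Pstar * pev (p.comp (Polynomial.X ^ d)) / pev (q.comp (Polynomial.X ^ d))) ≤
      (((-2 * ((q.comp (Polynomial.X ^ d)).natDegree : ℤ) - (c * d - d + 1)) : ℤ) :
        WithBot ℤ) :=
  rate_improvement_general g Pstar d hd hdeg hfe p q c happ
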